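/- Fix a real constant α and let G(w, w̄, v) be a smooth real-valued function of a complex variable w and real variable v satisfying equation (alterform) on ℂ × ℝ. Then for all real constants D₁, D₂, the function G̃(w, w̄, v) := G(w, w̄, v) + D₁ e^{v sin α} cos(v cos α) + D₂ e^{v sin α} sin(v cos α) also satisfies equation (alterform) on ℂ × ℝ. -/

import Mathlib

/-!
The added term h(v) depends on v alone, so it leaves every w-derivative of G unchanged and
only shifts the coefficient G + G_vv − 2 G_v sin α by h + h'' − 2 h' sin α. This vanishes because
h is a combination of e^{v sin α} cos(v cos α) and e^{v sin α} sin(v cos α), i.e. of the real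
and imaginary parts of e^{λv} with λ = sin α + i cos α, a root of λ² − 2λ sin α + 1 = 0.
-/

noncomputable section

/-- Wirtinger derivative ∂_w of a complex-valued function of (w, v) ∈ ℂ × ℝ. -/
def dw (G : ℂ → ℝ → ℂ) : ℂ → ℝ → ℂ := fun w v =>
  ((fderiv ℝ (fun z => G z v) w 1) - Complex.I * (fderiv ℝ (fun z => G z v) w Complex.I)) / 2

/-- Wirtinger derivative ∂_{w̄} of a complex-valued function of (w, v) ∈ ℂ × ℝ. -/
def dwb (G : ℂ → ℝ → ℂ) : ℂ → ℝ → ℂ := fun w v =>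
  ((fderiv ℝ (fun z => G z v) w 1) + Complex.I * (fderiv ℝ (fun z => G z v) w Complex.I)) / 2

/-- Partial derivative ∂_v of a complex-valued function of (w, v) ∈ ℂ × ℝ. -/
def dv (G : ℂ → ℝ → ℂ) : ℂ → ℝ → ℂ := fun w v => deriv (fun t => G w t) v

/-- A real-valued function of (w, v), viewed as complex-valued. -/
def cx (G : ℂ → ℝ → ℝ) : ℂ → ℝ → ℂ := fun w v => (G w v : ℂ)

/-- Equation (alterform) at the point (w, v):
(G + G_{vv} − 2 G_v sin α) G_{ww̄}
  − (e^{iα} G_{w̄} − i G_{vw̄})(e^{−iα} G_w + i G_{vw}) = 4. -/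
def Alterform (α : ℝ) (G : ℂ → ℝ → ℝ) (w : ℂ) (v : ℝ) : Prop :=
  (cx G w v + dv (dv (cx G)) w v - 2 * dv (cx G) w v * (Real.sin α : ℂ))
      * dwb (dw (cx G)) w v
    - (Complex.exp (Complex.I * (α : ℂ)) * dwb (cx G) w v
        - Complex.I * dwb (dv (cx G)) w v)
      * (Complex.exp (-(Complex.I * (α : ℂ))) * dw (cx G) w v
        + Complex.I * dw (dv (cx G)) w v)
    = 4

open Real

theorem dw_add_right (F : ℂ → ℝ → ℂ) (k : ℝ → ℂ) :
    dw (fun z t => F z t + k t) = dw F := by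
  funext z t
  simp only [dw, fderiv_add_const]

theorem dwb_add_right (F : ℂ → ℝ → ℂ) (k : ℝ → ℂ) :
    dwb (fun z t => F z t + k t) = dwb F := by
  funext z t
  simp only [dwb, fderiv_add_const]

theorem dv_add_right {F : ℂ → ℝ → ℂ} {k k' : ℝ → ℂ} (hF : ∀ z, Differentiable ℝ (F z))
    (hk : ∀ t, HasDerivAt k (k' t) t) :
    dv (fun z t => F z t + k t) = fun z t => dv F z t + k' t := by
  funext z t
  exact ((hF z t).hasDerivAt.add (hk t)).deriv

theorem cx_add_right (G : ℂ → ℝ → ℝ) (h : ℝ → ℝ) :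
    cx (fun z t => G z t + h t) = fun z t => cx G z t + (h t : ℂ) := by
  funext z t
  simp only [cx, Complex.ofReal_add]

theorem Alterform.add_right {α : ℝ} {G : ℂ → ℝ → ℝ} {h h' h'' : ℝ → ℝ}
    (hG : ∀ z, ContDiff ℝ 2 (G z)) (hh : ∀ t, HasDerivAt h (h' t) t)
    (hh' : ∀ t, HasDerivAt h' (h'' t) t) (hode : ∀ t, h t + h'' t - 2 * h' t * sin α = 0)
    {w : ℂ} {v : ℝ} (hsol : Alterform α G w v) :
    Alterform α (fun z t => G z t + h t) w v := by
  have hslice : ∀ z, ContDiff ℝ (1 + 1) (cx G z) := fun z =>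
    Complex.ofRealCLM.contDiff.comp (hG z)
  have hdiff : ∀ z, Differentiable ℝ (cx G z) := fun z =>
    (contDiff_succ_iff_deriv.mp (hslice z)).1
  have hdiff' : ∀ z, Differentiable ℝ (dv (cx G) z) := fun z =>
    (contDiff_succ_iff_deriv.mp (hslice z)).2.2.differentiable one_ne_zero
  have hode' : (h v : ℂ) + h'' v - 2 * h' v * (sin α : ℂ) = 0 := mod_cast hode v
  unfold Alterform at hsol ⊢
  rw [cx_add_right, dv_add_right hdiff fun t => (hh t).ofReal_comp,
    dv_add_right hdiff' fun t => (hh' t).ofReal_comp]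
  simp only [dw_add_right, dwb_add_right]
  linear_combination hsol + hode' * dwb (dw (cx G)) w v

def expTrig (s c A B t : ℝ) : ℝ :=
  A * (exp (t * s) * cos (t * c)) + B * (exp (t * s) * sin (t * c))

theorem hasDerivAt_expTrig (s c A B t : ℝ) :
    HasDerivAt (expTrig s c A B) (expTrig s c (A * s + B * c) (B * s - A * c) t) t := by
  have hexp := ((hasDerivAt_id t).mul_const s).exp
  have hcos := ((hasDerivAt_id t).mul_const c).cos
  have hsin := ((hasDerivAt_id t).mul_const c).sin
  refine (((hexp.mul hcos).const_mul A).add ((hexp.mul hsin).const_mul B)).congr_deriv ?_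
  simp only [expTrig, id]
  ring

theorem expTrig_ode {s c : ℝ} (hsc : s ^ 2 + c ^ 2 = 1) (A B t : ℝ) :
    expTrig s c A B t
      + expTrig s c ((A * s + B * c) * s + (B * s - A * c) * c)
          ((B * s - A * c) * s - (A * s + B * c) * c) t
      - 2 * expTrig s c (A * s + B * c) (B * s - A * c) t * s = 0 := by
  simp only [expTrig]
  linear_combination -(A * (exp (t * s) * cos (t * c)) + B * (exp (t * s) * sin (t * c))) * hsc

/-- Adding D₁ e^{v sin α} cos(v cos α) + D₂ e^{v sin α} sin(v cos α)
maps solutions of (alterform) to solutions. -/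
theorem alterform_additive_symmetry (α : ℝ) (G : ℂ → ℝ → ℝ)
    (hG : ContDiff ℝ (⊤ : ℕ∞) (fun p : ℂ × ℝ => G p.1 p.2))
    (hsol : ∀ w : ℂ, ∀ v : ℝ, Alterform α G w v)
    (D₁ D₂ : ℝ) :
    ∀ w : ℂ, ∀ v : ℝ, Alterform α
      (fun z t => G z t + D₁ * Real.exp (t * Real.sin α) * Real.cos (t * Real.cos α)
        + D₂ * Real.exp (t * Real.sin α) * Real.sin (t * Real.cos α)) w v := by
  intro w v
  have hslice : ∀ z, ContDiff ℝ 2 (G z) := fun z =>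
    (hG.comp (contDiff_const.prodMk contDiff_id)).of_le (WithTop.coe_le_coe.mpr le_top)
  have hfun : (fun z t => G z t + D₁ * exp (t * sin α) * cos (t * cos α)
      + D₂ * exp (t * sin α) * sin (t * cos α)) =
      fun z t => G z t + expTrig (sin α) (cos α) D₁ D₂ t := by
    funext z t
    simp only [expTrig]
    ring
  rw [hfun]
  exact (hsol w v).add_right hslice (hasDerivAt_expTrig _ _ _ _) (hasDerivAt_expTrig _ _ _ _)
    (expTrig_ode (sin_sq_add_cos_sq α) D₁ D₂)
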